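/- arXiv:2101.05157 — 5 statements merged into one kernel-verified Lean document; each statement's English description precedes it below -/
import Mathlib

section
/- Let g : [0,∞) → [0,∞) be an integrable, nonincreasing function with g(0) well defined, and suppose there exists λ > 0 such that for almost every t ≥ 0, λ ∫_t^∞ g(τ) dτ ≤ g(t). Then there exists a constant C depending only on λ such that for almost every t ≥ 0, g(t) ≤ C g(0) e^{-λ t}. -/
open MeasureTheory Set

/-!
Write `F t = ∫_t^∞ g`. A.e. on `(s, t]` we have `g ≥ λ F(τ) ≥ λ F(t)`, so
`F(t) (1 + λ (t - s)) ≤ F(s)`; iterating this over `n` equal steps and letting `n → ∞` gives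
`F(t) e^{λ t} ≤ F(0)`. A point `t₀ ∈ (0, 1/λ]` where the hypothesis holds yields
`F(0) ≤ ∫_0^{t₀} g + g(t₀)/λ ≤ 2 g(0)/λ`, and since `g` is nonincreasing,
`g(t)/λ ≤ F(t - 1/λ)`, whence `g(t) ≤ 2e g(0) e^{-λ t}`.
-/

section DiscreteGronwall

variable {F : ℝ → ℝ} {lam a : ℝ}

theorem mul_one_add_pow_le_of_mul_one_add_le (hlam : 0 ≤ lam)
    (hF : ∀ s t, a ≤ s → s ≤ t → F t * (1 + lam * (t - s)) ≤ F s) {h : ℝ} (hh : 0 ≤ h) (n : ℕ) :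
    F (a + n * h) * (1 + lam * h) ^ n ≤ F a := by
  induction n with
  | zero => simp
  | succ n ih =>
    have hstep := hF (a + n * h) (a + (n + 1 : ℕ) * h) (by nlinarith [n.cast_nonneg (α := ℝ)])
      (by push_cast; linarith)
    have hpow : 0 ≤ (1 + lam * h) ^ n := by positivity
    calc F (a + (n + 1 : ℕ) * h) * (1 + lam * h) ^ (n + 1)
        = F (a + (n + 1 : ℕ) * h) * (1 + lam * (a + (n + 1 : ℕ) * h - (a + n * h)))
            * (1 + lam * h) ^ n := by push_cast; ring
      _ ≤ F (a + n * h) * (1 + lam * h) ^ n := mul_le_mul_of_nonneg_right hstep hpow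
      _ ≤ F a := ih

theorem mul_exp_le_of_mul_one_add_le (hlam : 0 ≤ lam)
    (hF : ∀ s t, a ≤ s → s ≤ t → F t * (1 + lam * (t - s)) ≤ F s) {t : ℝ} (ht : a ≤ t) :
    F t * Real.exp (lam * (t - a)) ≤ F a := by
  refine le_of_tendsto ((Real.tendsto_one_add_div_pow_exp (lam * (t - a))).const_mul (F t)) ?_
  filter_upwards [Filter.eventually_ge_atTop 1] with n hn
  have hn0 : (n : ℝ) ≠ 0 := by positivity
  have hend : a + n * ((t - a) / n) = t := by field_simp; ring
  have hrate : lam * ((t - a) / n) = lam * (t - a) / n := by ring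
  simpa only [hend, hrate] using mul_one_add_pow_le_of_mul_one_add_le hlam hF
    (div_nonneg (sub_nonneg.2 ht) n.cast_nonneg) n

end DiscreteGronwall

section TailIntegral

variable {g : ℝ → ℝ} {lam s t : ℝ}

theorem integral_Ioi_le_integral_Ioi (hg_nonneg : ∀ x ∈ Ioi s, 0 ≤ g x)
    (hg_int : IntegrableOn g (Ioi s)) (hst : s ≤ t) :
    ∫ x in Ioi t, g x ≤ ∫ x in Ioi s, g x :=
  setIntegral_mono_set hg_int ((ae_restrict_iff' measurableSet_Ioi).2 (.of_forall hg_nonneg))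
    (Ioi_subset_Ioi hst).eventuallyLE

theorem integral_Ioi_mul_one_add_le (hlam : 0 ≤ lam) (hg_nonneg : ∀ x ∈ Ioi s, 0 ≤ g x)
    (hg_int : IntegrableOn g (Ioi s))
    (h_tail : ∀ᵐ τ ∂volume.restrict (Ioi s), lam * ∫ x in Ioi τ, g x ≤ g τ) (hst : s ≤ t) :
    (∫ x in Ioi t, g x) * (1 + lam * (t - s)) ≤ ∫ x in Ioi s, g x := by
  have h_const_le : ∀ᵐ τ ∂volume.restrict (Ioc s t), lam * ∫ x in Ioi t, g x ≤ g τ := by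
    filter_upwards [ae_restrict_of_ae_restrict_of_subset Ioc_subset_Ioi_self h_tail,
      ae_restrict_mem measurableSet_Ioc] with τ hτ hτ_mem
    refine le_trans (mul_le_mul_of_nonneg_left ?_ hlam) hτ
    exact integral_Ioi_le_integral_Ioi (fun x hx => hg_nonneg x (hτ_mem.1.trans hx))
      (hg_int.mono_set (Ioi_subset_Ioi hτ_mem.1.le)) hτ_mem.2
  have h_chunk : lam * (∫ x in Ioi t, g x) * (t - s) ≤ ∫ x in Ioc s t, g x := by
    calc lam * (∫ x in Ioi t, g x) * (t - s)
        = ∫ _ in Ioc s t, lam * ∫ x in Ioi t, g x := by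
          rw [setIntegral_const, Real.volume_real_Ioc_of_le hst, smul_eq_mul, mul_comm]
      _ ≤ ∫ x in Ioc s t, g x :=
          setIntegral_mono_ae_restrict (integrableOn_const (by simp))
            (hg_int.mono_set Ioc_subset_Ioi_self) h_const_le
  have h_split := intervalIntegral.integral_Ioi_sub_Ioi hg_int hst
  rw [intervalIntegral.integral_of_le hst] at h_split
  linarith

theorem mul_sub_le_integral_Ioi_of_antitoneOn (hg_nonneg : ∀ x ∈ Ioi s, 0 ≤ g x)
    (hg_int : IntegrableOn g (Ioi s)) (hg_anti : AntitoneOn g (Ici s)) (hst : s ≤ t) :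
    g t * (t - s) ≤ ∫ x in Ioi s, g x := by
  have h_chunk : g t * (t - s) ≤ ∫ x in s..t, g x := by
    simpa [mul_comm] using intervalIntegral.integral_mono_on hst intervalIntegrable_const
      ((intervalIntegrable_iff_integrableOn_Ioc_of_le hst).2
        (hg_int.mono_set Ioc_subset_Ioi_self))
      (fun x hx => hg_anti hx.1 (hx.1.trans hx.2) hx.2)
  have h_split := intervalIntegral.integral_Ioi_sub_Ioi hg_int hst
  have h_rest : 0 ≤ ∫ x in Ioi t, g x :=
    setIntegral_nonneg measurableSet_Ioi fun x hx => hg_nonneg x (lt_of_le_of_lt hst hx)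
  linarith

theorem integral_Ioi_le_two_mul_div (hlam : 0 < lam) (hgs : 0 ≤ g s)
    (hg_int : IntegrableOn g (Ioi s)) (hg_anti : AntitoneOn g (Ici s))
    (h_tail : ∀ᵐ τ ∂volume.restrict (Ioi s), lam * ∫ x in Ioi τ, g x ≤ g τ) :
    ∫ x in Ioi s, g x ≤ 2 * g s / lam := by
  obtain ⟨t₀, ⟨hs_t₀, ht₀⟩, h_t₀⟩ :
      ∃ t₀ ∈ Ioc s (s + lam⁻¹), lam * ∫ x in Ioi t₀, g x ≤ g t₀ := by
    have : (ae (volume.restrict (Ioc s (s + lam⁻¹)))).NeBot :=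
      ae_restrict_neBot.2 (by simp [hlam])
    exact ((ae_restrict_mem measurableSet_Ioc).and
      (ae_restrict_of_ae_restrict_of_subset Ioc_subset_Ioi_self h_tail)).exists
  have h_head : ∫ x in s..t₀, g x ≤ (t₀ - s) * g s := by
    simpa using intervalIntegral.integral_mono_on hs_t₀.le
      ((intervalIntegrable_iff_integrableOn_Ioc_of_le hs_t₀.le).2
        (hg_int.mono_set Ioc_subset_Ioi_self)) intervalIntegrable_const
      (fun x hx => hg_anti self_mem_Ici hx.1 hx.1)
  have h_rest : lam * ∫ x in Ioi t₀, g x ≤ g s :=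
    h_t₀.trans (hg_anti self_mem_Ici hs_t₀.le hs_t₀.le)
  have h_short : lam * (t₀ - s) * g s ≤ g s := by
    refine mul_le_of_le_one_left hgs ?_
    have := mul_le_mul_of_nonneg_left (sub_le_iff_le_add'.2 ht₀) hlam.le
    rwa [mul_inv_cancel₀ hlam.ne'] at this
  have h_split := intervalIntegral.integral_Ioi_sub_Ioi hg_int hs_t₀.le
  rw [le_div_iff₀ hlam]
  nlinarith [mul_le_mul_of_nonneg_left h_head hlam.le]

end TailIntegral

theorem mul_exp_le_of_integral_Ioi_mul_exp_le {g : ℝ → ℝ} {lam K t : ℝ} (hlam : 0 < lam)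
    (hg_nonneg : ∀ x, 0 ≤ g x) (hg_int : IntegrableOn g (Ici 0)) (hg_anti : AntitoneOn g (Ici 0))
    (hK : g 0 ≤ K) (h_decay : ∀ s, 0 ≤ s → lam * (∫ x in Ioi s, g x) * Real.exp (lam * s) ≤ K)
    (ht : 0 ≤ t) :
    g t * Real.exp (lam * t) ≤ Real.exp 1 * K := by
  rcases le_or_gt t lam⁻¹ with h_small | h_large
  · have h_exp : Real.exp (lam * t) ≤ Real.exp 1 := by
      rw [Real.exp_le_exp, ← mul_inv_cancel₀ hlam.ne']
      exact mul_le_mul_of_nonneg_left h_small hlam.le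
    rw [mul_comm (Real.exp 1)]
    exact mul_le_mul ((hg_anti self_mem_Ici ht ht).trans hK) h_exp (Real.exp_pos _).le
      ((hg_nonneg 0).trans hK)
  · set s := t - lam⁻¹ with hs_def
    have hs : 0 ≤ s := by linarith
    have h_window : g t * lam⁻¹ ≤ ∫ x in Ioi s, g x := by
      simpa [hs_def] using mul_sub_le_integral_Ioi_of_antitoneOn (fun x _ => hg_nonneg x)
        (hg_int.mono_set fun x hx => hs.trans (le_of_lt hx))
        (hg_anti.mono (Ici_subset_Ici.2 hs)) (sub_le_self t (by positivity))
    have h_bound : g t * Real.exp (lam * s) ≤ K := by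
      calc g t * Real.exp (lam * s) = lam * (g t * lam⁻¹) * Real.exp (lam * s) := by
            field_simp
        _ ≤ lam * (∫ x in Ioi s, g x) * Real.exp (lam * s) := by gcongr
        _ ≤ K := h_decay s hs
    calc g t * Real.exp (lam * t) = Real.exp 1 * (g t * Real.exp (lam * s)) := by
          rw [mul_left_comm, ← Real.exp_add, hs_def, mul_sub, mul_inv_cancel₀ hlam.ne',
            add_sub_cancel]
      _ ≤ Real.exp 1 * K := mul_le_mul_of_nonneg_left h_bound (Real.exp_pos 1).le

/-- A Gronwall-type lemma: if `g : [0,∞) → [0,∞)` is integrable, nonincreasing and satisfies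
`λ ∫_t^∞ g ≤ g(t)` for a.e. `t ≥ 0`, then `g(t) ≤ C g(0) e^{-λ t}` for a.e. `t ≥ 0`,
with `C` depending only on `λ`. -/
theorem stmt0 (lam : ℝ) (hlam : 0 < lam) :
    ∃ C : ℝ, 0 < C ∧ ∀ g : ℝ → ℝ,
      (∀ t, 0 ≤ g t) →
      IntegrableOn g (Ici 0) →
      AntitoneOn g (Ici 0) →
      (∀ᵐ t ∂(volume.restrict (Ici (0:ℝ))), lam * ∫ τ in Ioi t, g τ ≤ g t) →
      ∀ᵐ t ∂(volume.restrict (Ici (0:ℝ))), g t ≤ C * g 0 * Real.exp (-lam * t) := by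
  refine ⟨2 * Real.exp 1, by positivity, fun g hg_nonneg hg_int hg_anti h_tail => ?_⟩
  have hg_int' (s : ℝ) (hs : 0 ≤ s) : IntegrableOn g (Ioi s) :=
    hg_int.mono_set fun x hx => hs.trans (le_of_lt hx)
  have h_tail' (s : ℝ) (hs : 0 ≤ s) :
      ∀ᵐ τ ∂volume.restrict (Ioi s), lam * ∫ x in Ioi τ, g x ≤ g τ :=
    ae_restrict_of_ae_restrict_of_subset (fun x hx => hs.trans (le_of_lt hx)) h_tail
  have h_tail_zero : ∫ x in Ioi 0, g x ≤ 2 * g 0 / lam :=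
    integral_Ioi_le_two_mul_div hlam (hg_nonneg 0) (hg_int' 0 le_rfl) hg_anti (h_tail' 0 le_rfl)
  have h_decay (s : ℝ) (hs : 0 ≤ s) :
      lam * (∫ x in Ioi s, g x) * Real.exp (lam * s) ≤ 2 * g 0 := by
    have := mul_exp_le_of_mul_one_add_le (F := fun t => ∫ x in Ioi t, g x) hlam.le
      (fun s t hs hst => integral_Ioi_mul_one_add_le hlam.le (fun x _ => hg_nonneg x)
        (hg_int' s hs) (h_tail' s hs) hst) hs
    rw [sub_zero] at this
    calc lam * (∫ x in Ioi s, g x) * Real.exp (lam * s)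
        = lam * ((∫ x in Ioi s, g x) * Real.exp (lam * s)) := mul_assoc _ _ _
      _ ≤ lam * ∫ x in Ioi 0, g x := mul_le_mul_of_nonneg_left this hlam.le
      _ ≤ 2 * g 0 := (le_div_iff₀' hlam).1 h_tail_zero
  refine (ae_restrict_iff' measurableSet_Ici).2 (.of_forall fun t (ht : 0 ≤ t) => ?_)
  have := mul_exp_le_of_integral_Ioi_mul_exp_le hlam hg_nonneg hg_int hg_anti
    (le_mul_of_one_le_left (hg_nonneg 0) one_le_two) h_decay ht
  calc g t = g t * Real.exp (lam * t) * Real.exp (-lam * t) := by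
        rw [mul_assoc, ← Real.exp_add]; simp
    _ ≤ Real.exp 1 * (2 * g 0) * Real.exp (-lam * t) :=
        mul_le_mul_of_nonneg_right this (Real.exp_pos _).le
    _ = 2 * Real.exp 1 * g 0 * Real.exp (-lam * t) := by ring
end

section
/- Let u ∈ L¹(ℝ⁺; W^{1,∞}(ℝ³)) be a time-dependent vector field with ∫₀^∞ ‖∇u(s)‖_∞ ds ≤ δ < 1, and let X(t;0,x,v) be the solution of Ẋ = V, V̇ = u(t,X) − V with X(0)=x, V(0)=v. Then for every t ≥ 0 and every (x,v), the spatial Jacobian satisfies ‖D_x X(t;0,x,v)‖ ≤ 1/(1−δ), and similarly ‖D_v X(t;0,x,v)‖ ≤ 1/(1−δ). -/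
/-!
For two characteristics, the differences `P = X - X'` and `Q = V - V'` solve `P' = Q`, `Q' = R - Q` with
`‖R s‖ ≤ K s ‖P s‖`. Since `s ↦ P s + (1 - e^{s-t}) Q s` has derivative `(1 - e^{s-t}) R s`, the
Duhamel formula `P t = P 0 + (1 - e^{-t}) Q 0 + ∫₀ᵗ (1 - e^{s-t}) R s ds` follows, and its kernel lies
in `[0, 1]`. At a maximum point of `‖P‖` on `[0, T]` this gives `M ≤ ‖P 0‖ + ‖Q 0‖ + δ M`, so the flow
is `1/(1-δ)`-Lipschitz in `(x, v)`, which bounds both Jacobians.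
-/

open MeasureTheory Set

abbrev E3 := EuclideanSpace ℝ (Fin 3)

open Real

variable {E : Type*} [NormedAddCommGroup E] [NormedSpace ℝ E]

lemma norm_one_sub_exp_smul_le {c : ℝ} (hc : c ≤ 0) (v : E) : ‖(1 - exp c) • v‖ ≤ ‖v‖ := by
  have h₀ : 0 ≤ 1 - exp c := sub_nonneg.2 (exp_le_one_iff.2 hc)
  have h₁ : 1 - exp c ≤ 1 := by linarith [exp_pos c]
  rw [norm_smul, norm_of_nonneg h₀]
  exact mul_le_of_le_one_left (norm_nonneg v) h₁

variable [CompleteSpace E]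

/-- No measurability of `f'` is assumed: it agrees with the measurable function `deriv f`. -/
lemma norm_sub_le_integral_of_norm_deriv_le {f f' : ℝ → E} {g : ℝ → ℝ} {a b : ℝ} (hab : a ≤ b)
    (hf : ∀ s ∈ Icc a b, HasDerivAt f (f' s) s) (hbound : ∀ s ∈ Ioc a b, ‖f' s‖ ≤ g s)
    (hg : IntegrableOn g (Ioc a b)) :
    ‖f b - f a‖ ≤ ∫ s in a..b, g s := by
  have hbound_ae : ∀ᵐ s ∂volume.restrict (Ioc a b), ‖f' s‖ ≤ g s :=
    (ae_restrict_iff' measurableSet_Ioc).2 (.of_forall hbound)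
  have hmeas : AEStronglyMeasurable f' (volume.restrict (Ioc a b)) :=
    (stronglyMeasurable_deriv f).aestronglyMeasurable.congr <|
      (ae_restrict_iff' measurableSet_Ioc).2 <|
        .of_forall fun s hs => (hf s (Ioc_subset_Icc_self hs)).deriv
  have hint : IntervalIntegrable f' volume a b :=
    (intervalIntegrable_iff_integrableOn_Ioc_of_le hab).2 (hg.mono' hmeas hbound_ae)
  rw [← intervalIntegral.integral_eq_sub_of_hasDerivAt
    (fun s hs => hf s (by rwa [uIcc_of_le hab] at hs)) hint]
  exact intervalIntegral.norm_integral_le_of_norm_le hab (.of_forall hbound)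
    ((intervalIntegrable_iff_integrableOn_Ioc_of_le hab).2 hg)

lemma norm_sub_duhamel_le {P Q R : ℝ → E} {g : ℝ → ℝ} {t : ℝ} (ht : 0 ≤ t)
    (hP : ∀ s ∈ Icc 0 t, HasDerivAt P (Q s) s)
    (hQ : ∀ s ∈ Icc 0 t, HasDerivAt Q (R s - Q s) s)
    (hR : ∀ s ∈ Ioc 0 t, ‖R s‖ ≤ g s) (hg : IntegrableOn g (Ioc 0 t)) :
    ‖P t - (P 0 + (1 - exp (-t)) • Q 0)‖ ≤ ∫ s in 0..t, g s := by
  have hG : ∀ s ∈ Icc 0 t, HasDerivAt (fun s => P s + (1 - exp (s - t)) • Q s)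
      ((1 - exp (s - t)) • R s) s := by
    intro s hs
    have hexp : HasDerivAt (fun s => 1 - exp (s - t)) (-exp (s - t)) s := by
      simpa using ((hasDerivAt_id s).sub_const t).exp.const_sub 1
    exact ((hP s hs).add (hexp.smul (hQ s hs))).congr_deriv (by module)
  have hG_bound : ∀ s ∈ Ioc 0 t, ‖(1 - exp (s - t)) • R s‖ ≤ g s := fun s hs =>
    (norm_one_sub_exp_smul_le (by linarith [hs.2]) _).trans (hR s hs)
  simpa [sub_eq_add_neg] using norm_sub_le_integral_of_norm_deriv_le ht hG hG_bound hg

theorem norm_le_of_damped_of_norm_forcing_le_mul {P Q R : ℝ → E} {K : ℝ → ℝ} {δ : ℝ} (hδ : δ < 1)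
    (hK0 : ∀ t, 0 ≤ K t) (hKint : IntegrableOn K (Ioi 0)) (hKδ : ∫ t in Ioi 0, K t ≤ δ)
    (hP : ∀ t ≥ (0:ℝ), HasDerivAt P (Q t) t) (hQ : ∀ t ≥ (0:ℝ), HasDerivAt Q (R t - Q t) t)
    (hR : ∀ t, ‖R t‖ ≤ K t * ‖P t‖) {T : ℝ} (hT : 0 ≤ T) :
    ‖P T‖ ≤ (‖P 0‖ + ‖Q 0‖) / (1 - δ) := by
  have hPcont : ContinuousOn P (Icc 0 T) := fun s hs => (hP s hs.1).continuousAt.continuousWithinAt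
  obtain ⟨t₀, ht₀, hmax⟩ := isCompact_Icc.exists_isMaxOn ⟨0, le_rfl, hT⟩ hPcont.norm
  set M := ‖P t₀‖
  have hM : 0 ≤ M := norm_nonneg _
  have hK_le : ∫ s in 0..t₀, K s ≤ δ := by
    rw [intervalIntegral.integral_of_le ht₀.1]
    exact (setIntegral_mono_set hKint (.of_forall fun s => hK0 s)
      (.of_forall fun _ hs => Ioc_subset_Ioi_self hs)).trans hKδ
  have hR_le : ∀ s ∈ Ioc 0 t₀, ‖R s‖ ≤ K s * M := fun s hs =>
    (hR s).trans (mul_le_mul_of_nonneg_left (hmax ⟨hs.1.le, hs.2.trans ht₀.2⟩) (hK0 s))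
  have hduhamel := norm_sub_duhamel_le ht₀.1 (fun s hs => hP s hs.1) (fun s hs => hQ s hs.1)
    hR_le ((hKint.mono_set Ioc_subset_Ioi_self).mul_const M)
  simp only [intervalIntegral.integral_mul_const] at hduhamel
  have hM_le : M ≤ ‖P 0‖ + ‖Q 0‖ + δ * M := calc
    M = ‖P 0 + (1 - exp (-t₀)) • Q 0 + (P t₀ - (P 0 + (1 - exp (-t₀)) • Q 0))‖ := by
      rw [add_sub_cancel]
    _ ≤ ‖P 0‖ + ‖(1 - exp (-t₀)) • Q 0‖ + ‖P t₀ - (P 0 + (1 - exp (-t₀)) • Q 0)‖ :=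
      norm_add₃_le
    _ ≤ ‖P 0‖ + ‖Q 0‖ + δ * M := by
      gcongr
      · exact norm_one_sub_exp_smul_le (by linarith [ht₀.1]) _
      · exact hduhamel.trans (mul_le_mul_of_nonneg_right hK_le hM)
  calc ‖P T‖ ≤ M := hmax ⟨hT, le_rfl⟩
    _ ≤ (‖P 0‖ + ‖Q 0‖) / (1 - δ) := by
      rw [le_div_iff₀ (by linarith)]
      linarith

theorem norm_flow_sub_le {u : ℝ → E → E} {K : ℝ → ℝ} {δ : ℝ} (hδ : δ < 1)
    (hK0 : ∀ t, 0 ≤ K t) (hLip : ∀ t x y, ‖u t x - u t y‖ ≤ K t * ‖x - y‖)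
    (hKint : IntegrableOn K (Ioi 0)) (hKδ : ∫ t in Ioi 0, K t ≤ δ)
    {X V : ℝ → E → E → E} (hX0 : ∀ x v, X 0 x v = x) (hV0 : ∀ x v, V 0 x v = v)
    (hXd : ∀ x v, ∀ t ≥ (0:ℝ), HasDerivAt (fun s => X s x v) (V t x v) t)
    (hVd : ∀ x v, ∀ t ≥ (0:ℝ), HasDerivAt (fun s => V s x v) (u t (X t x v) - V t x v) t)
    (x v y w : E) {t : ℝ} (ht : 0 ≤ t) :
    ‖X t x v - X t y w‖ ≤ (‖x - y‖ + ‖v - w‖) / (1 - δ) := by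
  have hQ : ∀ s ≥ (0:ℝ), HasDerivAt (fun s => V s x v - V s y w)
      ((u s (X s x v) - u s (X s y w)) - (V s x v - V s y w)) s := fun s hs =>
    ((hVd x v s hs).sub (hVd y w s hs)).congr_deriv (by abel)
  simpa [hX0, hV0] using norm_le_of_damped_of_norm_forcing_le_mul hδ hK0 hKint hKδ
    (fun s hs => (hXd x v s hs).sub (hXd y w s hs)) hQ (fun s => hLip s _ _) ht

/-- Jacobian bounds for the characteristic flow of `Ẋ = V`, `V̇ = u(t,X) − V`: if the
Lipschitz constants `K t` of `u(t,·)` satisfy `∫₀^∞ K ≤ δ < 1`, then the spatial and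
velocity Jacobians of `X(t;0,·,·)` are bounded by `1/(1−δ)` for all `t ≥ 0`. -/
theorem stmt7 (u : ℝ → E3 → E3) (K : ℝ → ℝ) (δ : ℝ) (hδ : δ < 1)
    (hK0 : ∀ t, 0 ≤ K t)
    (hLip : ∀ t x y, ‖u t x - u t y‖ ≤ K t * ‖x - y‖)
    (hKint : IntegrableOn K (Ioi (0:ℝ)))
    (hKδ : ∫ t in Ioi (0:ℝ), K t ≤ δ)
    (X V : ℝ → E3 → E3 → E3)
    (hX0 : ∀ x v, X 0 x v = x) (hV0 : ∀ x v, V 0 x v = v)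
    (hXd : ∀ x v, ∀ t ≥ (0:ℝ), HasDerivAt (fun s => X s x v) (V t x v) t)
    (hVd : ∀ x v, ∀ t ≥ (0:ℝ), HasDerivAt (fun s => V s x v) (u t (X t x v) - V t x v) t)
    (DxX DvX : ℝ → E3 → E3 → (E3 →L[ℝ] E3))
    (hDx : ∀ t ≥ (0:ℝ), ∀ x v, HasFDerivAt (fun y => X t y v) (DxX t x v) x)
    (hDv : ∀ t ≥ (0:ℝ), ∀ x v, HasFDerivAt (fun w => X t x w) (DvX t x v) v) :
    ∀ t ≥ (0:ℝ), ∀ x v, ‖DxX t x v‖ ≤ 1 / (1 - δ) ∧ ‖DvX t x v‖ ≤ 1 / (1 - δ) := by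
  intro t ht x v
  have hC : (0:ℝ) ≤ 1 / (1 - δ) := one_div_nonneg.2 (by linarith)
  have hflow := fun x v y w => norm_flow_sub_le hδ hK0 hLip hKint hKδ hX0 hV0 hXd hVd x v y w ht
  constructor
  · refine (hDx t ht x v).le_of_lip' hC (.of_forall fun y => ?_)
    calc _ ≤ (‖y - x‖ + ‖v - v‖) / (1 - δ) := hflow y v x v
      _ = 1 / (1 - δ) * ‖y - x‖ := by rw [sub_self, norm_zero, add_zero]; ring
  · refine (hDv t ht x v).le_of_lip' hC (.of_forall fun w => ?_)
    calc _ ≤ (‖x - x‖ + ‖w - v‖) / (1 - δ) := hflow x w x v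
      _ = 1 / (1 - δ) * ‖w - v‖ := by rw [sub_self, norm_zero, zero_add]; ring
end

section
/- With the same damped characteristic ODE Ẋ = V, V̇ = u(t,X) − V, suppose ‖u‖_{L¹(ℝ⁺;L^∞(ℝ³))} ≤ L/8, |x − a| ≤ ε, |v| ≥ R, and L > ε, R > (ε + 2L)/(1 − e^{−T}) for some T > 0. Then sup_{t ∈ [0,T]} |X(t;0,x,v) − a| > L; in particular the trajectory exits the ball B(a,L) within time T. -/
/-!
Along the trajectory put `f t = u t (X t)`. Then `X + V` has derivative `f`, and
`t ↦ e^{t-T} V t` has derivative `e^{t-T} f t`, so `X T + V T` and `V T` stay within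
`∫₀ᵀ ‖f‖ ≤ ‖u‖_{L¹L^∞}` of their free values `x + v` and `e^{-T} v`. Eliminating `V T` gives
`‖X T - a‖ ≥ (1 - e^{-T}) ‖v‖ - ‖x - a‖ - 2 ‖u‖_{L¹L^∞} > 2L - L/4 ≥ L`.
-/

open MeasureTheory Set

section DampedCharacteristics

variable {E : Type*} [NormedAddCommGroup E] [NormedSpace ℝ E]

theorem norm_sub_le_integral_of_hasDerivAt {F F' : ℝ → E} {B : ℝ → ℝ} {a b : ℝ} (hab : a ≤ b)
    (hF : ∀ t ∈ Icc a b, HasDerivAt F (F' t) t) (hFB : ∀ t ∈ Ioo a b, ‖F' t‖ ≤ B t)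
    (hB : IntervalIntegrable B volume a b) :
    ‖F b - F a‖ ≤ ∫ t in a..b, B t :=
  norm_sub_le_integral_of_norm_deriv_le_of_le hab
    (fun t ht => (hF t ht).continuousAt.continuousWithinAt)
    (fun t ht => (hF t (Ioo_subset_Icc_self ht)).differentiableAt.differentiableWithinAt)
    (.of_forall fun t ht => (hF t (Ioo_subset_Icc_self ht)).deriv ▸ hFB t ht) hB

variable {X V f : ℝ → E} {g : ℝ → ℝ} {T : ℝ}

theorem norm_velocity_sub_exp_neg_smul_le (hT : 0 ≤ T)
    (hV : ∀ t ∈ Icc 0 T, HasDerivAt V (f t - V t) t) (hfg : ∀ t ∈ Icc 0 T, ‖f t‖ ≤ g t)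
    (hg : IntervalIntegrable g volume 0 T) :
    ‖V T - Real.exp (-T) • V 0‖ ≤ ∫ t in 0..T, g t := by
  have hderiv : ∀ t ∈ Icc 0 T, HasDerivAt (fun s => Real.exp (s - T) • V s)
      (Real.exp (t - T) • f t) t := fun t ht =>
    (((hasDerivAt_id t).sub_const T).exp.smul (hV t ht)).congr_deriv (by
      simp only [id, mul_one, smul_sub]
      abel)
  have hbound : ∀ t ∈ Ioo 0 T, ‖Real.exp (t - T) • f t‖ ≤ g t := fun t ht => by
    have hexp : Real.exp (t - T) ≤ 1 := Real.exp_le_one_iff.2 (by linarith [ht.2])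
    rw [norm_smul, Real.norm_of_nonneg (Real.exp_pos _).le]
    exact (mul_le_of_le_one_left (norm_nonneg _) hexp).trans (hfg t (Ioo_subset_Icc_self ht))
  simpa using norm_sub_le_integral_of_hasDerivAt hT hderiv hbound hg

theorem norm_position_add_velocity_sub_le (hT : 0 ≤ T)
    (hX : ∀ t ∈ Icc 0 T, HasDerivAt X (V t) t) (hV : ∀ t ∈ Icc 0 T, HasDerivAt V (f t - V t) t)
    (hfg : ∀ t ∈ Icc 0 T, ‖f t‖ ≤ g t) (hg : IntervalIntegrable g volume 0 T) :
    ‖X T + V T - (X 0 + V 0)‖ ≤ ∫ t in 0..T, g t :=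
  norm_sub_le_integral_of_hasDerivAt hT
    (fun t ht => ((hX t ht).add (hV t ht)).congr_deriv (add_sub_cancel _ _))
    (fun t ht => hfg t (Ioo_subset_Icc_self ht)) hg

theorem le_norm_position_sub (a : E) (hT : 0 ≤ T)
    (hX : ∀ t ∈ Icc 0 T, HasDerivAt X (V t) t) (hV : ∀ t ∈ Icc 0 T, HasDerivAt V (f t - V t) t)
    (hfg : ∀ t ∈ Icc 0 T, ‖f t‖ ≤ g t) (hg : IntervalIntegrable g volume 0 T) :
    (1 - Real.exp (-T)) * ‖V 0‖ - ‖X 0 - a‖ - 2 * ∫ t in 0..T, g t ≤ ‖X T - a‖ := by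
  have hdecomp : (1 - Real.exp (-T)) • V 0 = (X T - a) - (X 0 - a)
      - (X T + V T - (X 0 + V 0)) + (V T - Real.exp (-T) • V 0) := by
    rw [sub_smul, one_smul]
    abel
  have hfree : (1 - Real.exp (-T)) * ‖V 0‖ = ‖(1 - Real.exp (-T)) • V 0‖ := by
    rw [norm_smul, Real.norm_of_nonneg (sub_nonneg.2 (Real.exp_le_one_iff.2 (by linarith)))]
  rw [hfree, hdecomp]
  have h₁ := norm_position_add_velocity_sub_le hT hX hV hfg hg
  have h₂ := norm_velocity_sub_exp_neg_smul_le hT hV hfg hg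
  have h₃ := norm_add_le ((X T - a) - (X 0 - a) - (X T + V T - (X 0 + V 0)))
    (V T - Real.exp (-T) • V 0)
  have h₄ := norm_sub_le ((X T - a) - (X 0 - a)) (X T + V T - (X 0 + V 0))
  have h₅ := norm_sub_le (X T - a) (X 0 - a)
  linarith

end DampedCharacteristics

theorem stmt10_general (u : ℝ → E3 → E3) (ub : ℝ → ℝ)
    (hub : ∀ t y, ‖u t y‖ ≤ ub t)
    (hubint : IntegrableOn ub (Ioi (0:ℝ)))
    (a x v : E3) (ε R L T : ℝ) (hT : 0 < T)
    (hu1 : ∫ s in Ioi (0:ℝ), ub s ≤ L / 8)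
    (hx : ‖x - a‖ ≤ ε) (hv : R ≤ ‖v‖)
    (hR : (ε + 2 * L) / (1 - Real.exp (-T)) < R)
    (X V : ℝ → E3) (hX0 : X 0 = x) (hV0 : V 0 = v)
    (hXd : ∀ t ≥ (0:ℝ), HasDerivAt X (V t) t)
    (hVd : ∀ t ≥ (0:ℝ), HasDerivAt V (u t (X t) - V t) t) :
    (L < ⨆ t : Icc (0:ℝ) T, ‖X t - a‖) ∧ ∃ t ∈ Icc (0:ℝ) T, L < ‖X t - a‖ := by
  have hub0 : ∀ t, 0 ≤ ub t := fun t => (norm_nonneg _).trans (hub t 0)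
  have hubT : IntervalIntegrable ub volume 0 T :=
    (intervalIntegrable_iff_integrableOn_Ioc_of_le hT.le).2 (hubint.mono_set Ioc_subset_Ioi_self)
  have hexit := le_norm_position_sub a hT.le (fun t ht => hXd t ht.1) (fun t ht => hVd t ht.1)
    (fun t _ => hub t (X t)) hubT
  have hI : ∫ t in 0..T, ub t ≤ ∫ s in Ioi (0:ℝ), ub s := by
    rw [intervalIntegral.integral_of_le hT.le]
    exact setIntegral_mono_set hubint (.of_forall hub0)
      (.of_forall fun _ hs => Ioc_subset_Ioi_self hs)
  have hL : 0 ≤ L := by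
    linarith [setIntegral_nonneg (μ := volume) measurableSet_Ioi fun s (_ : s ∈ Ioi (0:ℝ)) =>
      hub0 s]
  have hdamp : 0 < 1 - Real.exp (-T) := sub_pos.2 (Real.exp_lt_one_iff.2 (neg_lt_zero.2 hT))
  have hR' : ε + 2 * L < R * (1 - Real.exp (-T)) := (div_lt_iff₀ hdamp).1 hR
  have hv' := mul_le_mul_of_nonneg_right hv hdamp.le
  rw [hX0, hV0] at hexit
  have hXT : L < ‖X T - a‖ := by linarith
  have hTmem : T ∈ Icc (0:ℝ) T := right_mem_Icc.2 hT.le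
  have hbdd : BddAbove (range fun t : Icc (0:ℝ) T => ‖X t - a‖) := by
    rw [← image_eq_range (fun t => ‖X t - a‖)]
    refine (isCompact_Icc.image_of_continuousOn (ContinuousOn.norm ?_)).bddAbove
    exact fun t ht => ((hXd t ht.1).continuousAt.sub continuousAt_const).continuousWithinAt
  exact ⟨hXT.trans_le (le_ciSup hbdd ⟨T, hTmem⟩), T, hTmem, hXT⟩

/-- High-initial-velocity exit lemma for `Ẋ = V`, `V̇ = u(t,X) − V`: if
`‖u‖_{L¹(ℝ⁺;L^∞)} ≤ L/8`, `|x−a| ≤ ε`, `|v| ≥ R`, `L > ε` and `R > (ε+2L)/(1−e^{−T})`,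
then `sup_{[0,T]} |X(t)−a| > L`; in particular the trajectory exits `B(a,L)` by time `T`. -/
theorem stmt10 (u : ℝ → E3 → E3) (ub : ℝ → ℝ)
    (hub0 : ∀ t, 0 ≤ ub t)
    (hub : ∀ t y, ‖u t y‖ ≤ ub t)
    (hubint : IntegrableOn ub (Ioi (0:ℝ)))
    (a x v : E3) (ε R L T : ℝ) (hT : 0 < T)
    (hu1 : ∫ s in Ioi (0:ℝ), ub s ≤ L / 8)
    (hx : ‖x - a‖ ≤ ε) (hv : R ≤ ‖v‖)
    (hL : ε < L) (hR : (ε + 2 * L) / (1 - Real.exp (-T)) < R)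
    (X V : ℝ → E3) (hX0 : X 0 = x) (hV0 : V 0 = v)
    (hXd : ∀ t ≥ (0:ℝ), HasDerivAt X (V t) t)
    (hVd : ∀ t ≥ (0:ℝ), HasDerivAt V (u t (X t) - V t) t) :
    (L < ⨆ t : Icc (0:ℝ) T, ‖X t - a‖) ∧ ∃ t ∈ Icc (0:ℝ) T, L < ‖X t - a‖ :=
  stmt10_general u ub hub hubint a x v ε R L T hT hu1 hx hv hR X V hX0 hV0 hXd hVd
end

section
/- With the damped characteristic ODE Ẋ = V, V̇ = u(t,X) − V, assume B(a,ε) ⊂ Ω with d(B̄(a,ε), ∂Ω) > 0, 2R < d(B̄(a,ε), ∂Ω), and set δ = (d(B̄(a,ε),∂Ω)/2 − R)/2. If ‖u‖_{L¹(ℝ⁺;L^∞)} ≤ δ, then for all T ≥ 0 and all (x,v) ∈ B(a,ε) × B(0,R), the trajectory satisfies X(T;0,x,v) ∈ B(a, ε + R + 2δ), and this ball is strictly contained in Ω. -/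
/-!
Along a characteristic, `X + V` has derivative `u`, and `eᵗ V` has derivative `eᵗ u`. Integrating
both from `0` to `T` shows that `X(T) − x` differs from `(1 − e^{−T}) v` by at most
`2 ∫₀ᵀ ‖u‖_∞ ≤ 2δ`, so `X(T)` stays in `B(a, ε + R + 2δ) = B(a, ε + d/2)`. Every point of `∂Ω`
is at distance at least `ε + d` from `a`, so this ball misses `∂Ω` and, being connected and
meeting `Ω`, lies in `Ω`; it is a proper subset because the bounded set `Ω` has a boundary point.
-/

open MeasureTheory Set Metric

section Geometry

variable {E : Type*} [NormedAddCommGroup E] [NormedSpace ℝ E]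

lemma add_le_dist_of_forall_mem_closedBall_le {a z : E} {ε d : ℝ} (hε : 0 ≤ ε) (hd : 0 < d)
    (h : ∀ y ∈ closedBall a ε, d ≤ dist y z) : ε + d ≤ dist a z := by
  rcases le_or_gt (dist a z) ε with hza | hza
  · have := h z (mem_closedBall'.2 hza)
    rw [dist_self] at this
    linarith
  · have hpos : 0 < dist a z := hε.trans_lt hza
    set c := ε / dist a z
    have hc : c * dist a z = ε := div_mul_cancel₀ ε hpos.ne'
    have hc0 : 0 ≤ c := div_nonneg hε hpos.le
    have hc1 : c < 1 := (div_lt_one hpos).2 hza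
    have hy := h (AffineMap.lineMap a z c) (by
      rw [mem_closedBall, dist_lineMap_left, Real.norm_of_nonneg hc0, hc])
    rw [dist_lineMap_right, Real.norm_of_nonneg (by linarith)] at hy
    linarith

lemma ball_subset_of_forall_frontier_le_dist {Ω : Set E} (hΩ : IsOpen Ω) {a : E} {r : ℝ}
    (ha : a ∈ Ω) (h : ∀ z ∈ frontier Ω, r ≤ dist a z) : ball a r ⊆ Ω := by
  intro x hx
  refine (convex_ball a r).isPreconnected.subset_of_closure_inter_subset hΩ
    ⟨a, mem_ball_self (pos_of_mem_ball hx), ha⟩ (fun y ⟨hyΩ, hyr⟩ => ?_) hx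
  by_contra hy
  have := h y (hΩ.frontier_eq ▸ ⟨hyΩ, hy⟩)
  rw [mem_ball'] at hyr
  linarith

lemma ball_ssubset_of_forall_frontier_le_dist [Nontrivial E] {Ω : Set E} (hΩo : IsOpen Ω)
    (hΩb : Bornology.IsBounded Ω) {a : E} {r s : ℝ} (ha : a ∈ Ω) (hrs : r < s)
    (h : ∀ z ∈ frontier Ω, s ≤ dist a z) : ball a r ⊂ Ω := by
  refine ⟨(ball_subset_ball hrs.le).trans (ball_subset_of_forall_frontier_le_dist hΩo ha h),
    fun hΩr => ?_⟩
  obtain ⟨z, hz⟩ : (frontier Ω).Nonempty :=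
    nonempty_frontier_iff.2 ⟨⟨a, ha⟩, fun hu => NormedSpace.unbounded_univ ℝ E (hu ▸ hΩb)⟩
  have hzr : z ∈ closedBall a r :=
    closure_ball_subset_closedBall (closure_mono hΩr (frontier_subset_closure hz))
  linarith [h z hz, mem_closedBall'.1 hzr]

end Geometry

section Dynamics

variable {E : Type*} [NormedAddCommGroup E] [NormedSpace ℝ E] [CompleteSpace E]

lemma norm_sub_le_integral_of_hasDerivAt_of_norm_le {g g' : ℝ → E} {b : ℝ → ℝ} {T : ℝ}
    (hT : 0 ≤ T) (hg : ∀ t ∈ Icc 0 T, HasDerivAt g (g' t) t) (hg' : ∀ t ∈ Icc 0 T, ‖g' t‖ ≤ b t)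
    (hb : IntervalIntegrable b volume 0 T) : ‖g T - g 0‖ ≤ ∫ t in 0..T, b t := by
  have hbound : ∀ t ∈ Ioc 0 T, ‖g' t‖ ≤ b t := fun t ht => hg' t (Ioc_subset_Icc_self ht)
  -- `g'` agrees with `deriv g` on `(0, T]`, which makes it measurable there.
  have hmeas : AEStronglyMeasurable g' (volume.restrict (Ioc 0 T)) := by
    refine (aestronglyMeasurable_deriv g _).congr ?_
    filter_upwards [ae_restrict_mem measurableSet_Ioc] with t ht
    exact (hg t (Ioc_subset_Icc_self ht)).deriv
  have hint : IntervalIntegrable g' volume 0 T :=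
    (intervalIntegrable_iff_integrableOn_Ioc_of_le hT).2 <|
      ((intervalIntegrable_iff_integrableOn_Ioc_of_le hT).1 hb).mono' hmeas
        (ae_restrict_of_forall_mem measurableSet_Ioc hbound)
  rw [← intervalIntegral.integral_eq_sub_of_hasDerivAt
    (fun t ht => hg t (by rwa [uIcc_of_le hT] at ht)) hint]
  exact intervalIntegral.norm_integral_le_of_norm_le hT (ae_of_all _ hbound) hb

variable {X V u : ℝ → E} {b : ℝ → ℝ} {T : ℝ}

lemma norm_sub_exp_neg_smul_le_of_damped (hT : 0 ≤ T)
    (hV : ∀ t ∈ Icc 0 T, HasDerivAt V (u t - V t) t) (hu : ∀ t ∈ Icc 0 T, ‖u t‖ ≤ b t)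
    (hb : IntervalIntegrable b volume 0 T) :
    ‖V T - Real.exp (-T) • V 0‖ ≤ ∫ t in 0..T, b t := by
  have hW : ∀ t ∈ Icc 0 T, HasDerivAt (fun s => Real.exp s • V s) (Real.exp t • u t) t := by
    intro t ht
    exact ((Real.hasDerivAt_exp t).smul (hV t ht)).congr_deriv (by rw [smul_sub, sub_add_cancel])
  have hWu : ∀ t ∈ Icc 0 T, ‖Real.exp t • u t‖ ≤ Real.exp T * b t := by
    intro t ht
    rw [norm_smul, Real.norm_of_nonneg (Real.exp_pos t).le]
    exact mul_le_mul (Real.exp_le_exp.2 ht.2) (hu t ht) (norm_nonneg _) (Real.exp_pos T).le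
  have key := norm_sub_le_integral_of_hasDerivAt_of_norm_le hT hW hWu (hb.const_mul _)
  have hsplit : Real.exp T • V T - Real.exp 0 • V 0 =
      Real.exp T • (V T - Real.exp (-T) • V 0) := by
    rw [smul_sub, smul_smul, ← Real.exp_add, add_neg_cancel]
  rw [hsplit, norm_smul, Real.norm_of_nonneg (Real.exp_pos T).le,
    intervalIntegral.integral_const_mul] at key
  exact le_of_mul_le_mul_left key (Real.exp_pos T)

lemma norm_sub_le_of_damped (hT : 0 ≤ T) (hX : ∀ t ∈ Icc 0 T, HasDerivAt X (V t) t)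
    (hV : ∀ t ∈ Icc 0 T, HasDerivAt V (u t - V t) t) (hu : ∀ t ∈ Icc 0 T, ‖u t‖ ≤ b t)
    (hb : IntervalIntegrable b volume 0 T) :
    ‖X T - X 0‖ ≤ ‖V 0‖ + 2 * ∫ t in 0..T, b t := by
  have hsum : ‖(X T + V T) - (X 0 + V 0)‖ ≤ ∫ t in 0..T, b t := by
    refine norm_sub_le_integral_of_hasDerivAt_of_norm_le (g := X + V) hT (fun t ht => ?_) hu hb
    exact ((hX t ht).add (hV t ht)).congr_deriv (by abel)
  have hvel := norm_sub_exp_neg_smul_le_of_damped hT hV hu hb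
  have hdrift : ‖(1 - Real.exp (-T)) • V 0‖ ≤ ‖V 0‖ := by
    rw [norm_smul, Real.norm_of_nonneg (by simpa using hT)]
    exact mul_le_of_le_one_left (norm_nonneg _) (by linarith [Real.exp_pos (-T)])
  rw [show X T - X 0 = ((X T + V T) - (X 0 + V 0)) - (V T - Real.exp (-T) • V 0)
      + (1 - Real.exp (-T)) • V 0 by module]
  linarith [norm_add_le (((X T + V T) - (X 0 + V 0)) - (V T - Real.exp (-T) • V 0))
    ((1 - Real.exp (-T)) • V 0), norm_sub_le ((X T + V T) - (X 0 + V 0))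
    (V T - Real.exp (-T) • V 0)]

end Dynamics

theorem stmt11_general (Ω : Set E3) (hΩo : IsOpen Ω) (hΩb : Bornology.IsBounded Ω)
    (a : E3) (ε R d : ℝ) (hε : 0 < ε)
    (hball : Metric.ball a ε ⊆ Ω)
    (hd : 0 < d)
    (hdist : ∀ y ∈ Metric.closedBall a ε, ∀ z ∈ frontier Ω, d ≤ dist y z)
    (δ : ℝ) (hδ : δ = (d / 2 - R) / 2)
    (u : ℝ → E3 → E3) (ub : ℝ → ℝ) (hub0 : ∀ t, 0 ≤ ub t)
    (hub : ∀ t y, ‖u t y‖ ≤ ub t) (hubint : IntegrableOn ub (Ioi (0:ℝ)))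
    (husmall : ∫ s in Ioi (0:ℝ), ub s ≤ δ)
    (X V : ℝ → E3 → E3 → E3)
    (hX0 : ∀ x v, X 0 x v = x) (hV0 : ∀ x v, V 0 x v = v)
    (hXd : ∀ x v, ∀ t ≥ (0:ℝ), HasDerivAt (fun s => X s x v) (V t x v) t)
    (hVd : ∀ x v, ∀ t ≥ (0:ℝ), HasDerivAt (fun s => V s x v) (u t (X t x v) - V t x v) t) :
    (∀ T ≥ (0:ℝ), ∀ x ∈ Metric.ball a ε, ∀ v ∈ Metric.ball (0:E3) R,
        X T x v ∈ Metric.ball a (ε + R + 2 * δ)) ∧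
      Metric.ball a (ε + R + 2 * δ) ⊂ Ω := by
  have hfront : ∀ z ∈ frontier Ω, ε + d ≤ dist a z := fun z hz =>
    add_le_dist_of_forall_mem_closedBall_le hε.le hd fun y hy => hdist y hy z hz
  have hrad : ε + R + 2 * δ = ε + d / 2 := by rw [hδ]; ring
  refine ⟨fun T hT x hx v hv => ?_, hrad ▸ ball_ssubset_of_forall_frontier_le_dist hΩo hΩb
    (hball (mem_ball_self hε)) (by linarith) hfront⟩
  have hubT : IntegrableOn ub (Ioc 0 T) := hubint.mono_set Ioc_subset_Ioi_self
  have hmass : ∫ t in 0..T, ub t ≤ δ := by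
    rw [intervalIntegral.integral_of_le hT]
    exact (setIntegral_mono_set hubint (ae_of_all _ hub0)
      Ioc_subset_Ioi_self.eventuallyLE).trans husmall
  have hmove := norm_sub_le_of_damped hT (fun t ht => hXd x v t ht.1)
    (fun t ht => hVd x v t ht.1) (fun t _ => hub t _)
    ((intervalIntegrable_iff_integrableOn_Ioc_of_le hT).2 hubT)
  rw [hX0, hV0, ← dist_eq_norm] at hmove
  rw [mem_ball] at hx ⊢
  rw [mem_ball_zero_iff] at hv
  linarith [dist_triangle (X T x v) x a]

/-- Confinement lemma: if `B(a,ε) ⊆ Ω`, the distance `d` from `B̄(a,ε)` to `∂Ω` is positive,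
`2R < d`, `δ = (d/2 − R)/2`, and `‖u‖_{L¹(ℝ⁺;L^∞)} ≤ δ`, then every characteristic of
`Ẋ = V`, `V̇ = u − V` starting in `B(a,ε) × B(0,R)` satisfies `X(T) ∈ B(a, ε+R+2δ)` for
all `T ≥ 0`, and this ball is strictly contained in `Ω`. -/
theorem stmt11 (Ω : Set E3) (hΩo : IsOpen Ω) (hΩb : Bornology.IsBounded Ω)
    (a : E3) (ε R d : ℝ) (hε : 0 < ε) (hR : 0 < R)
    (hball : Metric.ball a ε ⊆ Ω)
    (hd : 0 < d)
    (hdist : ∀ y ∈ Metric.closedBall a ε, ∀ z ∈ frontier Ω, d ≤ dist y z)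
    (h2R : 2 * R < d)
    (δ : ℝ) (hδ : δ = (d / 2 - R) / 2)
    (u : ℝ → E3 → E3) (ub : ℝ → ℝ) (hub0 : ∀ t, 0 ≤ ub t)
    (hub : ∀ t y, ‖u t y‖ ≤ ub t) (hubint : IntegrableOn ub (Ioi (0:ℝ)))
    (husmall : ∫ s in Ioi (0:ℝ), ub s ≤ δ)
    (X V : ℝ → E3 → E3 → E3)
    (hX0 : ∀ x v, X 0 x v = x) (hV0 : ∀ x v, V 0 x v = v)
    (hXd : ∀ x v, ∀ t ≥ (0:ℝ), HasDerivAt (fun s => X s x v) (V t x v) t)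
    (hVd : ∀ x v, ∀ t ≥ (0:ℝ), HasDerivAt (fun s => V s x v) (u t (X t x v) - V t x v) t) :
    (∀ T ≥ (0:ℝ), ∀ x ∈ Metric.ball a ε, ∀ v ∈ Metric.ball (0:E3) R,
        X T x v ∈ Metric.ball a (ε + R + 2 * δ)) ∧
      Metric.ball a (ε + R + 2 * δ) ⊂ Ω :=
  stmt11_general Ω hΩo hΩb a ε R d hε hball hd hdist δ hδ u ub hub0 hub hubint husmall X V hX0 hV0
    hXd hVd
end

section
/- Let x, y, z : [0,T] → [0,∞) with x continuous, z integrable, and suppose for all t ∈ [0,T]: x(t) + (1/2)∫₀^t y(s)ds ≤ x(0) + ∫₀^t C₁ z(s)ds + ∫₀^t C₁ x(s)(x(s)² − 1/(2C₁C₂)) ds, where C₁, C₂ > 0. If x(0) + C₁∫₀^T z(s)ds ≤ 1/(2√(2C₁C₂)), then for all t ∈ [0,T]: x(t) + (1/2)∫₀^t y(s)ds ≤ x(0) + C₁∫₀^T z(s)ds; in particular x(t) ≤ 1/(2√(2C₁C₂)) for all t. -/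
open MeasureTheory Set

lemma interval_integral_nonpos_of_ae_restrict {a b : ℝ} (hab : a ≤ b) {g : ℝ → ℝ}
    (h : ∀ᵐ s ∂(volume.restrict (Icc a b)), g s ≤ 0) : (∫ s in a..b, g s) ≤ 0 := by
  have h' : 0 ≤ ∫ s in a..b, -g s :=
    intervalIntegral.integral_nonneg_of_ae_restrict hab (h.mono fun s hs => neg_nonneg.mpr hs)
  rw [intervalIntegral.integral_neg] at h'
  linarith

/-- Bootstrap/continuation lemma for parabolic regularization: if
`x(t) + ½∫₀ᵗ y ≤ x(0) + ∫₀ᵗ C₁ z + ∫₀ᵗ C₁ x (x² − 1/(2C₁C₂))` on `[0,T]` and the data is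
small, `x(0) + C₁∫₀^T z ≤ 1/(2√(2C₁C₂))`, then `x(t) + ½∫₀ᵗ y ≤ x(0) + C₁∫₀^T z` on
`[0,T]`; in particular `x(t) ≤ 1/(2√(2C₁C₂))`. -/
theorem stmt16 (T C1 C2 : ℝ) (hT : 0 ≤ T) (hC1 : 0 < C1) (hC2 : 0 < C2)
    (x y z : ℝ → ℝ)
    (hxc : ContinuousOn x (Icc 0 T))
    (hx0 : ∀ t ∈ Icc (0:ℝ) T, 0 ≤ x t)
    (hy0 : ∀ t, 0 ≤ y t) (hz0 : ∀ t, 0 ≤ z t)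
    (hyint : IntegrableOn y (Icc 0 T))
    (hzint : IntegrableOn z (Icc 0 T))
    (hineq : ∀ t ∈ Icc (0:ℝ) T,
      x t + (1 / 2) * ∫ s in (0:ℝ)..t, y s ≤
        x 0 + (∫ s in (0:ℝ)..t, C1 * z s) +
          ∫ s in (0:ℝ)..t, C1 * x s * (x s ^ 2 - 1 / (2 * C1 * C2)))
    (hsmall : x 0 + C1 * ∫ s in (0:ℝ)..T, z s ≤ 1 / (2 * Real.sqrt (2 * C1 * C2))) :
    ∀ t ∈ Icc (0:ℝ) T,
      (x t + (1 / 2) * ∫ s in (0:ℝ)..t, y s ≤ x 0 + C1 * ∫ s in (0:ℝ)..T, z s) ∧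
        x t ≤ 1 / (2 * Real.sqrt (2 * C1 * C2)) := by
  set s2 := Real.sqrt (2 * C1 * C2) with hs2def
  have h2CC : (0:ℝ) < 2 * C1 * C2 := by positivity
  have hs2 : 0 < s2 := Real.sqrt_pos.mpr h2CC
  set M : ℝ := 1 / s2 with hMdef
  have hM : 0 < M := by positivity
  have hM2 : M ^ 2 = 1 / (2 * C1 * C2) := by
    rw [hMdef, div_pow, one_pow, Real.sq_sqrt h2CC.le]
  have hhalf : 1 / (2 * s2) = M / 2 := by
    rw [hMdef]; field_simp
  have hsmall' : x 0 + C1 * ∫ s in (0:ℝ)..T, z s ≤ M / 2 := by rw [← hhalf]; exact hsmall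
  -- cubic term is nonpositive when 0 ≤ v ≤ M
  have hcub : ∀ v : ℝ, 0 ≤ v → v ≤ M → C1 * v * (v ^ 2 - 1 / (2 * C1 * C2)) ≤ 0 := by
    intro v hv hvM
    have hv2 : v ^ 2 ≤ M ^ 2 := by nlinarith
    rw [← hM2]
    nlinarith [mul_nonneg hC1.le hv, hv2]
  -- z monotonicity in the interval
  have hzI : IntervalIntegrable (fun s => C1 * z s) volume 0 T := by
    apply IntegrableOn.intervalIntegrable
    rw [uIcc_of_le hT]
    exact hzint.const_mul C1
  have hzT : (∫ s in (0:ℝ)..T, C1 * z s) = C1 * ∫ s in (0:ℝ)..T, z s :=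
    intervalIntegral.integral_const_mul _ _
  have hzmono : ∀ t ∈ Icc (0:ℝ) T, (∫ s in (0:ℝ)..t, C1 * z s) ≤ C1 * ∫ s in (0:ℝ)..T, z s := by
    intro t ht
    rw [← hzT]
    exact intervalIntegral.integral_mono_interval le_rfl ht.1 ht.2
      (Filter.Eventually.of_forall fun s => mul_nonneg hC1.le (hz0 s)) hzI
  have hzTnn : 0 ≤ C1 * ∫ s in (0:ℝ)..T, z s := by
    have : (0:ℝ) ≤ ∫ s in (0:ℝ)..T, z s := intervalIntegral.integral_nonneg hT (fun u _ => hz0 u)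
    exact mul_nonneg hC1.le this
  -- integrability of the cubic term
  have hgC : ContinuousOn (fun s => C1 * x s * (x s ^ 2 - 1 / (2 * C1 * C2))) (Icc 0 T) :=
    (continuousOn_const.mul hxc).mul ((hxc.pow 2).sub continuousOn_const)
  have hynn : ∀ t ∈ Icc (0:ℝ) T, 0 ≤ ∫ s in (0:ℝ)..t, y s := fun t ht =>
    intervalIntegral.integral_nonneg ht.1 (fun u _ => hy0 u)
  -- main claim : x ≤ M on [0,T]
  have hxle : ∀ t ∈ Icc (0:ℝ) T, x t ≤ M := by
    by_contra hcon
    push_neg at hcon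
    obtain ⟨t1, ht1, hMt1⟩ := hcon
    set S : Set ℝ := Icc 0 T ∩ x ⁻¹' Ici M with hSdef
    have hSc : IsClosed S := hxc.preimage_isClosed_of_isClosed isClosed_Icc isClosed_Ici
    have hSne : S.Nonempty := ⟨t1, ht1, hMt1.le⟩
    have hSbdd : BddBelow S := ⟨0, fun s hs => hs.1.1⟩
    set t0 := sInf S with ht0def
    have ht0S : t0 ∈ S := hSc.csInf_mem hSne hSbdd
    have ht0 : t0 ∈ Icc (0:ℝ) T := ht0S.1
    have hMt0 : M ≤ x t0 := ht0S.2
    have hlt : ∀ s, 0 ≤ s → s < t0 → x s < M := by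
      intro s hs hst
      by_contra h
      push_neg at h
      exact absurd (csInf_le hSbdd ⟨⟨hs, hst.le.trans ht0.2⟩, h⟩) (not_le.mpr hst)
    -- cubic integral is ≤ 0 up to t0
    have hne : ∀ᵐ s ∂(volume.restrict (Icc (0:ℝ) t0)), s ≠ t0 := by
      apply ae_restrict_of_ae
      rw [ae_iff]
      simp
    have hgle : (∫ s in (0:ℝ)..t0, C1 * x s * (x s ^ 2 - 1 / (2 * C1 * C2))) ≤ 0 := by
      apply interval_integral_nonpos_of_ae_restrict ht0.1
      filter_upwards [ae_restrict_mem measurableSet_Icc, hne] with s hs hsne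
      have hst0 : s < t0 := lt_of_le_of_ne hs.2 hsne
      have hsT : s ∈ Icc (0:ℝ) T := ⟨hs.1, hs.2.trans ht0.2⟩
      exact hcub (x s) (hx0 s hsT) (hlt s hs.1 hst0).le
    have h1 := hineq t0 ht0
    have h2 := hzmono t0 ht0
    have h3 := hynn t0 ht0
    linarith [hsmall', hM]
  -- conclusion
  intro t ht
  have hgle : (∫ s in (0:ℝ)..t, C1 * x s * (x s ^ 2 - 1 / (2 * C1 * C2))) ≤ 0 := by
    apply interval_integral_nonpos_of_ae_restrict ht.1
    filter_upwards [ae_restrict_mem measurableSet_Icc] with s hs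
    have hsT : s ∈ Icc (0:ℝ) T := ⟨hs.1, hs.2.trans ht.2⟩
    exact hcub (x s) (hx0 s hsT) (hxle s hsT)
  have h1 := hineq t ht
  have h2 := hzmono t ht
  have h3 := hynn t ht
  constructor
  · linarith
  · rw [hhalf]
    linarith
end
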